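/- arXiv:0912.0071 — 5 statements merged into one kernel-verified Lean document; each statement's English description precedes it below -/
import Mathlib

section
/- Suppose the regularizer N : ℝ^d → ℝ is differentiable and 1-strongly convex, and the loss ℓ : ℝ → ℝ is convex and differentiable with |ℓ'(z)| ≤ 1 for all z. Then Algorithm 1 (output perturbation), which outputs f_priv = argmin_f J(f, D) + b where b ∈ ℝ^d is drawn from the density ν(b) ∝ e^{−β‖b‖₂} with β = nΛε_p/2, provides ε_p-differential privacy. -/
open MeasureTheory Real Set

noncomputable section

abbrev Vec (d : ℕ) := EuclideanSpace ℝ (Fin d)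

abbrev Dataset (d n : ℕ) := Fin n → Vec d × ℝ

/-- All data points have norm at most 1 and labels in {-1, +1}. -/
def ValidDataset {d n : ℕ} (D : Dataset d n) : Prop :=
  ∀ i, ‖(D i).1‖ ≤ 1 ∧ ((D i).2 = 1 ∨ (D i).2 = -1)

/-- Two datasets differ in (at most) one entry. -/
def Neighbor {d n : ℕ} (D D' : Dataset d n) : Prop :=
  ∃ j, ∀ i, i ≠ j → D i = D' i

/-- Regularized empirical risk J(f, D). -/
def J {d n : ℕ} (ℓ : ℝ → ℝ) (N : Vec d → ℝ) (Λ : ℝ) (D : Dataset d n) (f : Vec d) : ℝ :=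
  (1 / (n : ℝ)) * ∑ i, ℓ ((D i).2 * (inner ℝ f (D i).1 : ℝ)) + Λ * N f

/-- `lam`-strong convexity. -/
def SConvex {d : ℕ} (lam : ℝ) (H : Vec d → ℝ) : Prop :=
  ∀ α : ℝ, α ∈ Set.Ioo (0 : ℝ) 1 → ∀ f g : Vec d,
    H (α • f + (1 - α) • g) ≤
      α * H f + (1 - α) * H g - (lam / 2) * α * (1 - α) * ‖f - g‖ ^ 2

/-- Unnormalized measure on ℝ^d with density e^{-β‖b‖₂}. -/
def laplaceLike (d : ℕ) (β : ℝ) : Measure (Vec d) :=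
  volume.withDensity fun b => ENNReal.ofReal (Real.exp (-β * ‖b‖))

/-- The probability measure on ℝ^d with density proportional to e^{-β‖b‖₂}. -/
def noiseP (d : ℕ) (β : ℝ) : Measure (Vec d) :=
  (laplaceLike d β Set.univ)⁻¹ • laplaceLike d β

/-- ε-differential privacy for a randomized map from datasets to classifiers in ℝ^d. -/
def DiffPrivate {d n : ℕ} (ε : ℝ) (A : Dataset d n → Measure (Vec d)) : Prop :=
  ∀ D D' : Dataset d n, ValidDataset D → ValidDataset D' → Neighbor D D' →
    ∀ S : Set (Vec d), MeasurableSet S →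
      A D S ≤ ENNReal.ofReal (Real.exp ε) * A D' S

/-- The slack term log(1 + 2c/(nΛ) + c²/(n²Λ²)) of Algorithm 2. -/
def slack (c Λ : ℝ) (n : ℕ) : ℝ :=
  Real.log (1 + 2 * c / (n * Λ) + c ^ 2 / (n ^ 2 * Λ ^ 2))

/-- The adjusted privacy parameter ε_p' of Algorithm 2. -/
def objEps (εp c Λ : ℝ) (n : ℕ) : ℝ :=
  if 0 < εp - slack c Λ n then εp - slack c Λ n else εp / 2

/-- The additional regularization Δ of Algorithm 2. -/
def objDelta (εp c Λ : ℝ) (n : ℕ) : ℝ :=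
  if 0 < εp - slack c Λ n then 0 else c / (n * (Real.exp (εp / 4) - 1)) - Λ

/-- The perturbed objective of Algorithm 2: J(f,D) + (1/n)bᵀf + (Δ/2)‖f‖². -/
def Jpriv {d n : ℕ} (ℓ : ℝ → ℝ) (N : Vec d → ℝ) (Λ Δ : ℝ) (D : Dataset d n)
    (b f : Vec d) : ℝ :=
  J ℓ N Λ D f + (1 / (n : ℝ)) * (inner ℝ b f : ℝ) + (Δ / 2) * ‖f‖ ^ 2

/-- The regularizer N(f) = ½‖f‖². -/
def halfNormSq {d : ℕ} (f : Vec d) : ℝ := ‖f‖ ^ 2 / 2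

/-!
Each `J(·, D)` is `Λ`-strongly convex, and for neighbouring datasets `J(·, D) - J(·, D')` is
`(2/n)`-Lipschitz since only one loss term changes; adding the quadratic-growth inequalities at
the two minimizers bounds their distance by `2/(nΛ)`. Translating the density `e^{-β‖b‖}` by a
vector of length `r` changes it pointwise by a factor of at most `e^{βr}` (triangle inequality),
and `βr ≤ ε_p` for `r ≤ 2/(nΛ)`.
-/

open scoped NNReal ENNReal

namespace SConvex

variable {d : ℕ} {lam : ℝ} {H : Vec d → ℝ}

lemma const_mul (hH : SConvex lam H) {c : ℝ} (hc : 0 ≤ c) :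
    SConvex (c * lam) fun f => c * H f := by
  intro α hα f g
  have := mul_le_mul_of_nonneg_left (hH α hα f g) hc
  linarith

lemma convexOn_add (hH : SConvex lam H) {G : Vec d → ℝ} (hG : ConvexOn ℝ univ G) :
    SConvex lam fun f => G f + H f := by
  intro α hα f g
  have hGfg := hG.2 (mem_univ f) (mem_univ g) hα.1.le (sub_nonneg.2 hα.2.le) (add_sub_cancel α 1)
  have hHfg := hH α hα f g
  simp only [smul_eq_mul] at hGfg
  linarith

lemma add_mul_sq_norm_sub_le_of_forall_le {f₀ : Vec d} (hH : SConvex lam H)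
    (hmin : ∀ g, H f₀ ≤ H g) (f : Vec d) :
    H f₀ + lam / 2 * ‖f₀ - f‖ ^ 2 ≤ H f := by
  set T := {α : ℝ | H f₀ + lam / 2 * (1 - α) * ‖f₀ - f‖ ^ 2 ≤ H f}
  have hIoo (α : ℝ) (hα : α ∈ Ioo 0 1) : H f₀ + lam / 2 * (1 - α) * ‖f₀ - f‖ ^ 2 ≤ H f := by
    have := (hmin _).trans (hH α hα f f₀)
    rw [norm_sub_rev] at this
    nlinarith [hα.1]
  have hT : IsClosed T := isClosed_le (by fun_prop) continuous_const
  have h0 : (0 : ℝ) ∈ closure (Ioo 0 1) := by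
    rw [closure_Ioo zero_ne_one]
    exact ⟨le_rfl, zero_le_one⟩
  simpa [T] using hT.closure_subset_iff.2 hIoo h0

lemma norm_sub_le_of_lipschitzWith_sub {H' : Vec d → ℝ} (hH : SConvex lam H)
    (hH' : SConvex lam H') (hlam : 0 < lam) {f₀ f₀' : Vec d} (hmin : ∀ g, H f₀ ≤ H g)
    (hmin' : ∀ g, H' f₀' ≤ H' g) {L : ℝ≥0} (hL : LipschitzWith L fun f => H f - H' f) :
    ‖f₀ - f₀'‖ ≤ L / lam := by
  have h := hH.add_mul_sq_norm_sub_le_of_forall_le hmin f₀'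
  have h' := hH'.add_mul_sq_norm_sub_le_of_forall_le hmin' f₀
  have hLip := hL.dist_le_mul f₀' f₀
  rw [Real.dist_eq, dist_eq_norm, norm_sub_rev f₀', abs_le] at hLip
  rw [norm_sub_rev f₀'] at h'
  rw [le_div_iff₀ hlam]
  nlinarith [norm_nonneg (f₀ - f₀')]

end SConvex

section EmpiricalRisk

variable {d n : ℕ} {ℓ : ℝ → ℝ}

lemma convexOn_empiricalLoss (hℓ : ConvexOn ℝ univ ℓ) (D : Dataset d n) :
    ConvexOn ℝ univ fun f : Vec d => (1 / (n : ℝ)) * ∑ i, ℓ ((D i).2 * inner ℝ f (D i).1) := by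
  have hterm (i : Fin n) : ConvexOn ℝ univ fun f : Vec d => ℓ ((D i).2 * inner ℝ f (D i).1) := by
    simpa [Function.comp_def, real_inner_comm] using
      hℓ.comp_linearMap ((D i).2 • innerₗ (Vec d) (D i).1)
  have hsum : ConvexOn ℝ univ (∑ i, fun f : Vec d => ℓ ((D i).2 * inner ℝ f (D i).1)) :=
    Finset.sum_induction _ (ConvexOn ℝ univ) (fun _ _ => ConvexOn.add) (convexOn_const 0 convex_univ)
      fun i _ => hterm i
  rw [Finset.sum_fn] at hsum
  simpa only [smul_eq_mul] using hsum.smul (c := 1 / (n : ℝ)) (by positivity)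

lemma sConvex_J {N : Vec d → ℝ} {Λ : ℝ} (hΛ : 0 ≤ Λ) (hℓ : ConvexOn ℝ univ ℓ) (hN : SConvex 1 N)
    (D : Dataset d n) : SConvex Λ (J ℓ N Λ D) := by
  have := (hN.const_mul hΛ).convexOn_add (convexOn_empiricalLoss hℓ D)
  rwa [mul_one] at this

lemma lipschitzWith_comp_mul_inner (hℓ : LipschitzWith 1 ℓ) {x : Vec d} (hx : ‖x‖ ≤ 1) {y : ℝ}
    (hy : |y| ≤ 1) : LipschitzWith 1 fun f : Vec d => ℓ (y * inner ℝ f x) := by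
  refine LipschitzWith.of_dist_le_mul fun f g => ?_
  calc dist (ℓ (y * inner ℝ f x)) (ℓ (y * inner ℝ g x))
      ≤ dist (y * inner ℝ f x) (y * inner ℝ g x) := by simpa using hℓ.dist_le_mul _ _
    _ = |y| * |inner ℝ (f - g) x| := by rw [Real.dist_eq, ← mul_sub, ← inner_sub_left, abs_mul]
    _ ≤ 1 * (‖f - g‖ * 1) := by
        gcongr
        exact (abs_real_inner_le_norm _ _).trans (by gcongr)
    _ = 1 * dist f g := by rw [mul_one, dist_eq_norm]

lemma lipschitzWith_J_sub_J (hℓ : LipschitzWith 1 ℓ) (N : Vec d → ℝ) (Λ : ℝ) {D D' : Dataset d n}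
    (hD : ValidDataset D) (hD' : ValidDataset D') (hDD' : Neighbor D D') :
    LipschitzWith (2 / n) fun f => J ℓ N Λ D f - J ℓ N Λ D' f := by
  obtain ⟨j, hj⟩ := hDD'
  have habs {y : ℝ} (hy : y = 1 ∨ y = -1) : |y| ≤ 1 := by rcases hy with rfl | rfl <;> simp
  have hdiff : (fun f => J ℓ N Λ D f - J ℓ N Λ D' f) = fun f => (1 / (n : ℝ)) •
      (ℓ ((D j).2 * inner ℝ f (D j).1) - ℓ ((D' j).2 * inner ℝ f (D' j).1)) := by
    funext f
    have hsum : ∑ i, ℓ ((D i).2 * inner ℝ f (D i).1) - ∑ i, ℓ ((D' i).2 * inner ℝ f (D' i).1) =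
        ℓ ((D j).2 * inner ℝ f (D j).1) - ℓ ((D' j).2 * inner ℝ f (D' j).1) := by
      rw [← Finset.sum_sub_distrib]
      exact Finset.sum_eq_single_of_mem j (Finset.mem_univ j) fun i _ hi => by
        rw [hj i hi, sub_self]
    rw [J, J, smul_eq_mul, ← hsum]
    ring
  have hK : ‖1 / (n : ℝ)‖₊ * (1 + 1) = 2 / n := by
    ext
    simp only [one_div, nnnorm_inv, nnnorm_natCast, NNReal.coe_mul, NNReal.coe_inv,
      NNReal.coe_natCast, NNReal.coe_add, NNReal.coe_one, NNReal.coe_div, NNReal.coe_ofNat]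
    ring
  rw [hdiff, ← hK]
  exact (lipschitzWith_smul (1 / (n : ℝ))).comp
    ((lipschitzWith_comp_mul_inner hℓ (hD j).1 (habs (hD j).2)).sub
      (lipschitzWith_comp_mul_inner hℓ (hD' j).1 (habs (hD' j).2)))

lemma norm_sub_le_of_neighbor {N : Vec d → ℝ} {Λ : ℝ} (hΛ : 0 < Λ) (hℓconv : ConvexOn ℝ univ ℓ)
    (hℓ : LipschitzWith 1 ℓ) (hN : SConvex 1 N) {D D' : Dataset d n} (hD : ValidDataset D)
    (hD' : ValidDataset D') (hDD' : Neighbor D D') {f₀ f₀' : Vec d}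
    (hmin : ∀ g, J ℓ N Λ D f₀ ≤ J ℓ N Λ D g) (hmin' : ∀ g, J ℓ N Λ D' f₀' ≤ J ℓ N Λ D' g) :
    ‖f₀ - f₀'‖ ≤ 2 / (n * Λ) := by
  have := (sConvex_J hΛ.le hℓconv hN D).norm_sub_le_of_lipschitzWith_sub
    (sConvex_J hΛ.le hℓconv hN D') hΛ hmin hmin' (lipschitzWith_J_sub_J hℓ N Λ hD hD' hDD')
  simpa [div_div] using this

end EmpiricalRisk

lemma map_add_left_withDensity {G : Type*} [MeasurableSpace G] [AddGroup G] [MeasurableAdd G]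
    (μ : Measure G) [μ.IsAddLeftInvariant] (v : G) {ρ : G → ℝ≥0∞} (hρ : Measurable ρ) :
    (μ.withDensity ρ).map (v + ·) = μ.withDensity fun x => ρ (-v + x) := by
  ext s hs
  rw [Measure.map_apply (measurable_const_add v) hs, withDensity_apply _ hs,
    withDensity_apply _ (measurable_const_add v hs),
    ← (measurePreserving_add_left μ v).setLIntegral_comp_preimage hs
      (f := fun x => ρ (-v + x)) (hρ.comp (measurable_const_add (-v)))]
  simp

lemma map_add_laplaceLike {d : ℕ} (β : ℝ) (v : Vec d) :
    (laplaceLike d β).map (v + ·) =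
      volume.withDensity fun x => ENNReal.ofReal (exp (-β * ‖x - v‖)) := by
  rw [laplaceLike, map_add_left_withDensity _ _ (by fun_prop)]
  simp only [neg_add_eq_sub]

lemma exp_neg_mul_norm_sub_le {E : Type*} [SeminormedAddCommGroup E] {β : ℝ} (hβ : 0 ≤ β)
    (x u v : E) : exp (-β * ‖x - u‖) ≤ exp (β * ‖u - v‖) * exp (-β * ‖x - v‖) := by
  rw [← exp_add, exp_le_exp]
  nlinarith [norm_sub_le_norm_sub_add_norm_sub x u v]

lemma map_add_noiseP_le {d : ℕ} {β : ℝ} (hβ : 0 ≤ β) (u v : Vec d) :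
    (noiseP d β).map (u + ·) ≤ ENNReal.ofReal (exp (β * ‖u - v‖)) • (noiseP d β).map (v + ·) := by
  simp only [noiseP, Measure.map_smul, map_add_laplaceLike]
  rw [smul_comm, ← withDensity_smul' _ _ ENNReal.ofReal_ne_top]
  gcongr
  refine withDensity_mono (ae_of_all _ fun x => ?_)
  simp only [Pi.smul_apply, smul_eq_mul, ← ENNReal.ofReal_mul (exp_nonneg _)]
  exact ENNReal.ofReal_le_ofReal (exp_neg_mul_norm_sub_le hβ x u v)

theorem output_perturbation_is_private_general
    (d n : ℕ) (hn : 0 < n) (Λ εp : ℝ) (hΛ : 0 < Λ) (hεp : 0 < εp)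
    (ℓ : ℝ → ℝ) (N : Vec d → ℝ)
    (hNsc : SConvex 1 N)
    (hℓconv : ConvexOn ℝ Set.univ ℓ) (hℓdiff : Differentiable ℝ ℓ)
    (hℓderiv : ∀ z : ℝ, |deriv ℓ z| ≤ 1)
    (fmin : Dataset d n → Vec d)
    (hfmin : ∀ D : Dataset d n, ∀ g : Vec d, J ℓ N Λ D (fmin D) ≤ J ℓ N Λ D g) :
    DiffPrivate εp
      (fun D => Measure.map (fun b => fmin D + b) (noiseP d ((n : ℝ) * Λ * εp / 2))) := by
  intro D D' hD hD' hDD' S _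
  set β := (n : ℝ) * Λ * εp / 2 with hβ_def
  have hℓ : LipschitzWith 1 ℓ := lipschitzWith_of_nnnorm_deriv_le hℓdiff fun z => by
    rw [← NNReal.coe_le_coe, coe_nnnorm, Real.norm_eq_abs, NNReal.coe_one]
    exact hℓderiv z
  have hsens := norm_sub_le_of_neighbor hΛ hℓconv hℓ hNsc hD hD' hDD' (hfmin D) (hfmin D')
  have hβ : β * ‖fmin D - fmin D'‖ ≤ εp := by
    calc β * ‖fmin D - fmin D'‖ ≤ β * (2 / (n * Λ)) := by gcongr
      _ = εp := by rw [hβ_def]; field_simp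
  calc _ ≤ (ENNReal.ofReal (exp (β * ‖fmin D - fmin D'‖)) •
        (noiseP d β).map (fmin D' + ·)) S := map_add_noiseP_le (by positivity) _ _ S
    _ ≤ _ := by
      rw [Measure.smul_apply, smul_eq_mul]
      gcongr

/-- Theorem 6: output perturbation (Algorithm 1) is ε_p-differentially
private, provided N is differentiable and 1-strongly convex and ℓ is convex and
differentiable with |ℓ'(z)| ≤ 1 for all z. The algorithm outputs
f_priv = argmin_f J(f,D) + b where b has density ∝ e^{-β‖b‖₂} with β = nΛε_p/2. -/
theorem output_perturbation_is_private
    (d n : ℕ) (hn : 0 < n) (Λ εp : ℝ) (hΛ : 0 < Λ) (hεp : 0 < εp)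
    (ℓ : ℝ → ℝ) (N : Vec d → ℝ)
    (hNdiff : Differentiable ℝ N) (hNsc : SConvex 1 N)
    (hℓconv : ConvexOn ℝ Set.univ ℓ) (hℓdiff : Differentiable ℝ ℓ)
    (hℓderiv : ∀ z : ℝ, |deriv ℓ z| ≤ 1)
    (fmin : Dataset d n → Vec d)
    (hfmin : ∀ D : Dataset d n, ∀ g : Vec d, J ℓ N Λ D (fmin D) ≤ J ℓ N Λ D g) :
    DiffPrivate εp
      (fun D => Measure.map (fun b => fmin D + b) (noiseP d ((n : ℝ) * Λ * εp / 2))) :=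
  output_perturbation_is_private_general d n hn Λ εp hΛ hεp ℓ N hNsc hℓconv hℓdiff hℓderiv fmin
    hfmin
end
end

section
/- Fix a dataset D = {(x_i, y_i)}_{i=1}^n and parameters Λ > 0, Δ ≥ 0. Suppose the regularizer N : ℝ^d → ℝ is 1-strongly convex and differentiable, and the loss ℓ : ℝ → ℝ is convex and differentiable. Then the map sending b ∈ ℝ^d to f_priv = argmin_f [J(f, D) + (1/n)bᵀf + (Δ/2)‖f‖₂²] is a bijection from ℝ^d to ℝ^d; its inverse is f ↦ −nΛ∇N(f) − Σ_{i=1}^n y_i ℓ'(y_i fᵀx_i) x_i − nΔf. -/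
open MeasureTheory Real Set

noncomputable section

/-! The perturbed objective `Jpriv ℓ N Λ Δ D b` is strictly convex (`Λ N` is strictly convex, the
other terms are convex) and has gradient `(1/n) (b - noiseOf f)` at `f`. For a convex
differentiable function the minimizers are exactly the critical points, so `f` minimizes
`Jpriv ℓ N Λ Δ D b` iff `noiseOf f = b`. Hence `noiseOf ∘ fout = id`, and by uniqueness of the
minimizer every `f` equals `fout (noiseOf f)`. -/

open InnerProductSpace

section Convexity

variable {E : Type*} [NormedAddCommGroup E] [NormedSpace ℝ E] {s : Set E}

theorem convexOn_finset_sum {ι : Type*} (t : Finset ι) {f : ι → E → ℝ} (hs : Convex ℝ s)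
    (hf : ∀ i ∈ t, ConvexOn ℝ s (f i)) : ConvexOn ℝ s fun x => ∑ i ∈ t, f i x := by
  classical
  induction t using Finset.induction_on with
  | empty => simpa using convexOn_const 0 hs
  | insert i t hi ih =>
    simp only [Finset.sum_insert hi]
    exact (hf i (Finset.mem_insert_self i t)).add
      (ih fun j hj => hf j (Finset.mem_insert_of_mem hj))

theorem StrictConvexOn.const_mul {f : E → ℝ} {c : ℝ} (hf : StrictConvexOn ℝ s f) (hc : 0 < c) :
    StrictConvexOn ℝ s fun x => c * f x := by
  refine ⟨hf.1, fun x hx y hy hxy a b ha hb hab => ?_⟩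
  have h := mul_lt_mul_of_pos_left (hf.2 hx hy hxy ha hb hab) hc
  simp only [smul_eq_mul] at h ⊢
  linarith

theorem ConvexOn.isMinOn_of_hasFDerivAt_eq_zero {f : E → ℝ} {x : E} (hf : ConvexOn ℝ s f)
    (hx : x ∈ s) (hf' : HasFDerivAt f (0 : E →L[ℝ] ℝ) x) : IsMinOn f s x := by
  intro y hy
  let L : ℝ →ᵃ[ℝ] E := AffineMap.lineMap x y
  have hline : ConvexOn ℝ (L ⁻¹' s) (f ∘ L) := hf.comp_affineMap L
  have hderiv : HasDerivAt (f ∘ L) 0 0 := by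
    rw [← AffineMap.lineMap_apply_zero (k := ℝ) x y] at hf'
    simpa using hf'.comp_hasDerivAt (0 : ℝ) AffineMap.hasDerivAt_lineMap
  have := hline.le_slope_of_hasDerivAt (x := 0) (y := 1) (by simpa [L] using hx)
    (by simpa [L] using hy) one_pos hderiv
  simpa [slope_def_field, L] using this

end Convexity

theorem SConvex.strongConvexOn {d : ℕ} {m : ℝ} {H : Vec d → ℝ} (h : SConvex m H) :
    StrongConvexOn univ m H := by
  refine ⟨convex_univ, fun f _ g _ a b ha hb hab => ?_⟩
  obtain rfl : b = 1 - a := by linarith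
  rcases ha.eq_or_lt with rfl | ha
  · simp
  rcases hb.eq_or_lt with hb | hb
  · obtain rfl : a = 1 := by linarith
    simp
  have := h a ⟨ha, by linarith⟩ f g
  simp only [smul_eq_mul]
  linarith

theorem ConvexOn.comp_mul_inner {F : Type*} [NormedAddCommGroup F] [InnerProductSpace ℝ F]
    {ℓ : ℝ → ℝ} (hℓ : ConvexOn ℝ univ ℓ) (y : ℝ) (x : F) :
    ConvexOn ℝ univ fun f : F => ℓ (y * ⟪f, x⟫_ℝ) := by
  simpa [Function.comp_def, real_inner_comm] using hℓ.comp_linearMap (y • innerₛₗ ℝ x)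

section Perturbation

variable {d n : ℕ} {ℓ : ℝ → ℝ} {N : Vec d → ℝ} {Λ Δ : ℝ}

/-- The noise vector `b` for which `f` minimizes `Jpriv ℓ N Λ Δ D b`. -/
def noiseOf (ℓ : ℝ → ℝ) (N : Vec d → ℝ) (Λ Δ : ℝ) (D : Dataset d n) (f : Vec d) : Vec d :=
  -(((n : ℝ) * Λ) • gradient N f)
    - ∑ i, ((D i).2 * deriv ℓ ((D i).2 * (inner ℝ f (D i).1 : ℝ))) • (D i).1
    - ((n : ℝ) * Δ) • f

theorem strictConvexOn_Jpriv (hΛ : 0 < Λ) (hΔ : 0 ≤ Δ) (hN : SConvex 1 N)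
    (hℓ : ConvexOn ℝ univ ℓ) (D : Dataset d n) (b : Vec d) :
    StrictConvexOn ℝ univ (Jpriv ℓ N Λ Δ D b) := by
  have hloss : ConvexOn ℝ univ fun f : Vec d =>
      (1 / (n : ℝ)) * ∑ i, ℓ ((D i).2 * ⟪f, (D i).1⟫_ℝ) :=
    (convexOn_finset_sum _ convex_univ fun i _ => hℓ.comp_mul_inner _ _).smul (by positivity)
  have hreg : StrictConvexOn ℝ univ fun f => Λ * N f :=
    (hN.strongConvexOn.strictConvexOn one_pos).const_mul hΛ
  have hlin : ConvexOn ℝ univ fun f : Vec d => (1 / (n : ℝ)) * ⟪b, f⟫_ℝ :=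
    ((innerₛₗ ℝ b).convexOn convex_univ).smul (by positivity)
  have hsq : ConvexOn ℝ univ fun f : Vec d => (Δ / 2) * ‖f‖ ^ 2 :=
    (convexOn_univ_norm.pow (fun _ _ => norm_nonneg _) 2).smul (by positivity)
  exact ((hloss.add_strictConvexOn hreg).add_convexOn hlin).add_convexOn hsq

theorem hasGradientAt_Jpriv (hn : n ≠ 0) (hℓ : Differentiable ℝ ℓ) {f : Vec d}
    (hN : DifferentiableAt ℝ N f) (D : Dataset d n) (b : Vec d) :
    HasGradientAt (Jpriv ℓ N Λ Δ D b) ((n : ℝ)⁻¹ • (b - noiseOf ℓ N Λ Δ D f)) f := by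
  have hinner (x : Vec d) : HasFDerivAt (fun v : Vec d => ⟪v, x⟫_ℝ) (innerSL ℝ x) f := by
    simpa [real_inner_comm] using (innerSL ℝ x).hasFDerivAt (x := f)
  have hloss (i : Fin n) : HasFDerivAt (fun v : Vec d => ℓ ((D i).2 * ⟪v, (D i).1⟫_ℝ))
      (deriv ℓ ((D i).2 * ⟪f, (D i).1⟫_ℝ) • (D i).2 • innerSL ℝ (D i).1) f :=
    (hℓ _).hasDerivAt.comp_hasFDerivAt f ((hinner _).const_mul _)
  have h := ((((HasFDerivAt.fun_sum (u := Finset.univ) fun i _ => hloss i).const_mul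
    (1 / (n : ℝ))).add (HasFDerivAt.const_mul hN.hasGradientAt Λ)).add
    ((innerSL ℝ b).hasFDerivAt.const_mul (1 / (n : ℝ)))).add
    ((hasStrictFDerivAt_norm_sq f).hasFDerivAt.const_mul (Δ / 2))
  rw [hasGradientAt_iff_hasFDerivAt]
  refine h.congr_fderiv ?_
  ext v
  simp only [noiseOf, one_div, toDual_gradient, add_apply,
    smul_apply, sum_apply, coe_innerSL_apply, smul_eq_mul,
    nsmul_eq_mul, Nat.cast_ofNat, map_smul, map_sub, map_neg, map_sum,
    sub_apply, toDual_apply_apply, neg_apply]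
  field_simp
  ring_nf

theorem isMinOn_Jpriv_iff (hn : n ≠ 0) (hΛ : 0 < Λ) (hΔ : 0 ≤ Δ) (hNsc : SConvex 1 N)
    (hNdiff : Differentiable ℝ N) (hℓconv : ConvexOn ℝ univ ℓ) (hℓdiff : Differentiable ℝ ℓ)
    (D : Dataset d n) (b f : Vec d) :
    IsMinOn (Jpriv ℓ N Λ Δ D b) univ f ↔ noiseOf ℓ N Λ Δ D f = b := by
  have hgrad := hasGradientAt_Jpriv (Λ := Λ) (Δ := Δ) hn hℓdiff (hNdiff f) D b
  have hzero : (n : ℝ)⁻¹ • (b - noiseOf ℓ N Λ Δ D f) = 0 ↔ noiseOf ℓ N Λ Δ D f = b := by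
    simp [hn, sub_eq_zero, eq_comm]
  rw [← hzero]
  constructor
  · intro hmin
    exact (toDual ℝ (Vec d)).map_eq_zero_iff.1
      ((hmin.isLocalMin Filter.univ_mem).hasFDerivAt_eq_zero hgrad)
  · intro h0
    rw [h0] at hgrad
    exact (strictConvexOn_Jpriv hΛ hΔ hNsc hℓconv D b).convexOn.isMinOn_of_hasFDerivAt_eq_zero
      (mem_univ f) (by simpa using hasGradientAt_iff_hasFDerivAt.1 hgrad)

end Perturbation

theorem objective_perturbation_bijection_general
    (d n : ℕ) (hn : 0 < n) (Λ Δ : ℝ) (hΛ : 0 < Λ) (hΔ : 0 ≤ Δ)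
    (ℓ : ℝ → ℝ) (N : Vec d → ℝ)
    (hNsc : SConvex 1 N) (hNdiff : Differentiable ℝ N)
    (hℓconv : ConvexOn ℝ Set.univ ℓ) (hℓdiff : Differentiable ℝ ℓ)
    (D : Dataset d n)
    (fout : Vec d → Vec d)
    (hfout : ∀ b g : Vec d, Jpriv ℓ N Λ Δ D b (fout b) ≤ Jpriv ℓ N Λ Δ D b g) :
    Function.Bijective fout ∧
    ∀ b : Vec d,
      (-(((n : ℝ) * Λ) • gradient N (fout b))
        - ∑ i, ((D i).2 * deriv ℓ ((D i).2 * (inner ℝ (fout b) (D i).1 : ℝ))) • (D i).1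
        - ((n : ℝ) * Δ) • fout b) = b := by
  have hmin (b : Vec d) : IsMinOn (Jpriv ℓ N Λ Δ D b) univ (fout b) :=
    isMinOn_univ_iff.2 (hfout b)
  have hcrit := isMinOn_Jpriv_iff hn.ne' hΛ hΔ hNsc hNdiff hℓconv hℓdiff D
  have hinv (b : Vec d) : noiseOf ℓ N Λ Δ D (fout b) = b := (hcrit b (fout b)).1 (hmin b)
  refine ⟨⟨Function.LeftInverse.injective hinv, fun f => ⟨noiseOf ℓ N Λ Δ D f, ?_⟩⟩, hinv⟩
  exact (strictConvexOn_Jpriv hΛ hΔ hNsc hℓconv D _).eq_of_isMinOn (hmin _)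
    ((hcrit _ f).2 rfl) (mem_univ _) (mem_univ _)

/-- for a fixed dataset D and parameters Λ > 0, Δ ≥ 0, with N
1-strongly convex and differentiable and ℓ convex and differentiable, the map
b ↦ argmin_f [J(f,D) + (1/n)bᵀf + (Δ/2)‖f‖²] is a bijection of ℝ^d whose inverse is
f ↦ −nΛ∇N(f) − Σᵢ yᵢ ℓ'(yᵢ fᵀxᵢ) xᵢ − nΔf. -/
theorem objective_perturbation_bijection
    (d n : ℕ) (hn : 0 < n) (Λ Δ : ℝ) (hΛ : 0 < Λ) (hΔ : 0 ≤ Δ)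
    (ℓ : ℝ → ℝ) (N : Vec d → ℝ)
    (hNsc : SConvex 1 N) (hNdiff : Differentiable ℝ N)
    (hℓconv : ConvexOn ℝ Set.univ ℓ) (hℓdiff : Differentiable ℝ ℓ)
    (D : Dataset d n) (hD : ValidDataset D)
    (fout : Vec d → Vec d)
    (hfout : ∀ b g : Vec d, Jpriv ℓ N Λ Δ D b (fout b) ≤ Jpriv ℓ N Λ Δ D b g) :
    Function.Bijective fout ∧
    ∀ b : Vec d,
      (-(((n : ℝ) * Λ) • gradient N (fout b))
        - ∑ i, ((D i).2 * deriv ℓ ((D i).2 * (inner ℝ (fout b) (D i).1 : ℝ))) • (D i).1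
        - ((n : ℝ) * Δ) • fout b) = b :=
  objective_perturbation_bijection_general d n hn Λ Δ hΛ hΔ ℓ N hNsc hNdiff hℓconv hℓdiff D fout
    hfout
end
end

section
/- Suppose N : ℝ^d → ℝ is doubly differentiable with ‖∇²N(f)‖₂ ≤ η (operator norm) for all f, and ℓ : ℝ → ℝ is differentiable with continuous, c-Lipschitz derivative. Given a dataset D, let f* = argmin_f J(f, D) and let f_priv = f* + b, where b ∈ ℝ^d is drawn from the density ν(b) ∝ e^{−(nΛε_p/2)‖b‖₂}. Then with probability at least 1 − δ over the draw of b, J(f_priv, D) ≤ J(f*, D) + 2d²(c + Λη)log²(d/δ)/(Λ²n²ε_p²). -/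
open MeasureTheory Real Set

noncomputable section

/-
Write `β = nΛε_p/2` and `L = c + Λη`. The risk `J` has an `L`-Lipschitz derivative: a loss term
`f ↦ ℓ(y⟪f, x⟫)` has derivative `ℓ'(y⟪f, x⟫) • y⟪x, ·⟫`, which is `c|y|²‖x‖²`-Lipschitz, and the
Hessian bound makes `∇N` `η`-Lipschitz. As `∇J(f*) = 0`, the descent lemma gives
`J(f* + b) ≤ J(f*) + L‖b‖²/2`.

In polar coordinates `‖b‖` has density proportional to `r^(d-1) e^(-βr)`, so
`P(‖b‖ > t) = e^(-βt) ∑_{k<d} (βt)^k / k!`. Since `x^k ≤ k! e^(kx/(k+1))` (which reduces to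
`(k+1)^k ≤ k! e^k`), each term is at most `e^(-βt (d-1)/d)`, hence
`P(‖b‖ > t) ≤ d e^(-βt/d)`, which is `δ` for `t = d log(d/δ)/β`; on `‖b‖ ≤ t` the bound
`L t²/2` is the one claimed.
-/

open Filter Topology
open scoped Nat

section LipschitzFDeriv

variable {E : Type*} [NormedAddCommGroup E] [NormedSpace ℝ E]

structure HasLipschitzFDeriv (g : E → ℝ) (g' : E → E →L[ℝ] ℝ) (L : ℝ) : Prop where
  hasFDerivAt : ∀ x, HasFDerivAt g (g' x) x
  norm_sub_le : ∀ u v, ‖g' u - g' v‖ ≤ L * ‖u - v‖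

namespace HasLipschitzFDeriv

variable {g h : E → ℝ} {g' h' : E → E →L[ℝ] ℝ} {L M : ℝ}

theorem mono (hg : HasLipschitzFDeriv g g' L) (hLM : L ≤ M) : HasLipschitzFDeriv g g' M :=
  ⟨hg.hasFDerivAt, fun u v => (hg.norm_sub_le u v).trans (by gcongr)⟩

theorem add (hg : HasLipschitzFDeriv g g' L) (hh : HasLipschitzFDeriv h h' M) :
    HasLipschitzFDeriv (fun x => g x + h x) (fun x => g' x + h' x) (L + M) where
  hasFDerivAt x := (hg.hasFDerivAt x).add (hh.hasFDerivAt x)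
  norm_sub_le u v := calc
    ‖g' u + h' u - (g' v + h' v)‖ = ‖(g' u - g' v) + (h' u - h' v)‖ := by abel_nf
    _ ≤ L * ‖u - v‖ + M * ‖u - v‖ :=
      (norm_add_le _ _).trans (add_le_add (hg.norm_sub_le u v) (hh.norm_sub_le u v))
    _ = (L + M) * ‖u - v‖ := by ring

theorem const_mul (hg : HasLipschitzFDeriv g g' L) {a : ℝ} (ha : 0 ≤ a) :
    HasLipschitzFDeriv (fun x => a * g x) (fun x => a • g' x) (a * L) where
  hasFDerivAt x := (hg.hasFDerivAt x).const_mul a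
  norm_sub_le u v := by
    rw [← (smul_sub a (g' u) (g' v) :), norm_smul, Real.norm_of_nonneg ha, mul_assoc]
    exact mul_le_mul_of_nonneg_left (hg.norm_sub_le u v) ha

theorem sum {ι : Type*} (s : Finset ι) {g : ι → E → ℝ} {g' : ι → E → E →L[ℝ] ℝ} {L : ι → ℝ}
    (hg : ∀ i ∈ s, HasLipschitzFDeriv (g i) (g' i) (L i)) :
    HasLipschitzFDeriv (fun x => ∑ i ∈ s, g i x) (fun x => ∑ i ∈ s, g' i x) (∑ i ∈ s, L i) where
  hasFDerivAt x := HasFDerivAt.fun_sum fun i hi => (hg i hi).hasFDerivAt x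
  norm_sub_le u v := by
    rw [← Finset.sum_sub_distrib, Finset.sum_mul]
    exact (norm_sum_le _ _).trans (Finset.sum_le_sum fun i hi => (hg i hi).norm_sub_le u v)

theorem apply_add_le (hg : HasLipschitzFDeriv g g' L) (x b : E) :
    g (x + b) ≤ g x + g' x b + L / 2 * ‖b‖ ^ 2 := by
  set ψ : ℝ → ℝ := fun t => g (x + t • b) - t * g' x b - L / 2 * t ^ 2 * ‖b‖ ^ 2
  have hψ : ∀ t, HasDerivAt ψ (g' (x + t • b) b - g' x b - L * t * ‖b‖ ^ 2) t := by
    intro t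
    have hline : HasDerivAt (fun s : ℝ => x + s • b) b t := by
      simpa using ((hasDerivAt_id t).smul_const b).const_add x
    refine ((((hg.hasFDerivAt _).comp_hasDerivAt t hline).sub
      ((hasDerivAt_id t).mul_const (g' x b))).sub
      (((hasDerivAt_pow 2 t).const_mul (L / 2)).mul_const (‖b‖ ^ 2))).congr_deriv ?_
    rw [show 2 - 1 = 1 from rfl]
    push_cast
    ring
  have hψ'_nonpos : ∀ t, 0 ≤ t → g' (x + t • b) b - g' x b - L * t * ‖b‖ ^ 2 ≤ 0 := by
    intro t ht
    have : (g' (x + t • b) - g' x) b ≤ L * t * ‖b‖ ^ 2 := calc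
      _ ≤ ‖g' (x + t • b) - g' x‖ * ‖b‖ :=
          (le_abs_self _).trans ((g' (x + t • b) - g' x).le_opNorm b)
      _ ≤ L * ‖t • b‖ * ‖b‖ := by
          gcongr
          simpa using hg.norm_sub_le (x + t • b) x
      _ = L * t * ‖b‖ ^ 2 := by rw [norm_smul, Real.norm_of_nonneg ht]; ring
    simpa using this
  have hanti : AntitoneOn ψ (Ici 0) :=
    antitoneOn_of_hasDerivWithinAt_nonpos (convex_Ici 0)
      (fun t _ => (hψ t).continuousAt.continuousWithinAt)
      (fun t _ => (hψ t).hasDerivWithinAt)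
      (fun t ht => hψ'_nonpos t (interior_subset ht))
  have hψ1 : ψ 1 = g (x + b) - g' x b - L / 2 * ‖b‖ ^ 2 := by simp [ψ]
  have hψ0 : ψ 0 = g x := by simp [ψ]
  linarith [hanti (mem_Ici.2 le_rfl) (mem_Ici.2 zero_le_one) zero_le_one]

theorem apply_add_le_of_forall_le (hg : HasLipschitzFDeriv g g' L) {x : E}
    (hx : ∀ y, g x ≤ g y) (b : E) : g (x + b) ≤ g x + L / 2 * ‖b‖ ^ 2 := by
  have hmin : IsLocalMin g x := Eventually.of_forall hx
  have : g' x = 0 := hmin.hasFDerivAt_eq_zero (hg.hasFDerivAt x)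
  simpa [this] using hg.apply_add_le x b

end HasLipschitzFDeriv

theorem hasLipschitzFDeriv_comp_clm {ℓ : ℝ → ℝ} {c : ℝ} (hc : 0 ≤ c) (hℓ : Differentiable ℝ ℓ)
    (hℓ' : ∀ z₁ z₂, |deriv ℓ z₁ - deriv ℓ z₂| ≤ c * |z₁ - z₂|) (p : E →L[ℝ] ℝ) :
    HasLipschitzFDeriv (fun x => ℓ (p x)) (fun x => deriv ℓ (p x) • p) (c * ‖p‖ ^ 2) where
  hasFDerivAt x := (hℓ (p x)).hasDerivAt.comp_hasFDerivAt x p.hasFDerivAt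
  norm_sub_le u v := calc
    ‖deriv ℓ (p u) • p - deriv ℓ (p v) • p‖ = |deriv ℓ (p u) - deriv ℓ (p v)| * ‖p‖ := by
      rw [← (sub_smul (deriv ℓ (p u)) (deriv ℓ (p v)) p :), norm_smul, Real.norm_eq_abs]
    _ ≤ c * |p u - p v| * ‖p‖ := by gcongr; exact hℓ' _ _
    _ = c * ‖p (u - v)‖ * ‖p‖ := by rw [map_sub, Real.norm_eq_abs]
    _ ≤ c * (‖p‖ * ‖u - v‖) * ‖p‖ := by gcongr; exact p.le_opNorm _
    _ = c * ‖p‖ ^ 2 * ‖u - v‖ := by ring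

theorem hasLipschitzFDeriv_of_norm_fderiv_fderiv_le {N : E → ℝ} {η : ℝ}
    (hN : Differentiable ℝ N) (hN' : Differentiable ℝ (fderiv ℝ N))
    (hη : ∀ x, ‖fderiv ℝ (fderiv ℝ N) x‖ ≤ η) : HasLipschitzFDeriv N (fderiv ℝ N) η where
  hasFDerivAt x := (hN x).hasFDerivAt
  norm_sub_le u v := convex_univ.norm_image_sub_le_of_norm_fderiv_le (fun x _ => hN' x)
    (fun x _ => hη x) (mem_univ v) (mem_univ u)

end LipschitzFDeriv

theorem hasLipschitzFDeriv_J {d n : ℕ} {ℓ : ℝ → ℝ} {N : Vec d → ℝ} {Λ η c : ℝ}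
    {D : Dataset d n} (hD : ValidDataset D) (hΛ : 0 ≤ Λ) (hc : 0 ≤ c)
    (hℓ : Differentiable ℝ ℓ) (hℓ' : ∀ z₁ z₂, |deriv ℓ z₁ - deriv ℓ z₂| ≤ c * |z₁ - z₂|)
    (hN : HasLipschitzFDeriv N (fderiv ℝ N) η) :
    ∃ J', HasLipschitzFDeriv (J ℓ N Λ D) J' (c + Λ * η) := by
  set p : Fin n → Vec d →L[ℝ] ℝ := fun i => (D i).2 • innerSL ℝ (D i).1
  have hp : ∀ i, ‖p i‖ ≤ 1 := fun i => by
    rcases hD i with ⟨hx, hy | hy⟩ <;> simpa [p, hy, norm_smul] using hx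
  have hloss : HasLipschitzFDeriv (fun f => (1 / (n : ℝ)) * ∑ i, ℓ (p i f)) _
      ((1 / (n : ℝ)) * ∑ i, c * ‖p i‖ ^ 2) :=
    (HasLipschitzFDeriv.sum _ fun i _ => hasLipschitzFDeriv_comp_clm hc hℓ hℓ' (p i)).const_mul
      (by positivity)
  have hconst : (1 / (n : ℝ)) * ∑ i, c * ‖p i‖ ^ 2 ≤ c := calc
    _ ≤ (1 / (n : ℝ)) * ∑ _i : Fin n, c := by
      gcongr with i
      exact mul_le_of_le_one_right hc (pow_le_one₀ (norm_nonneg _) (hp i))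
    _ = (n / n : ℝ) * c := by simp; ring
    _ ≤ c := mul_le_of_le_one_left hc (div_self_le_one _)
  have hJ : J ℓ N Λ D = fun f => (1 / (n : ℝ)) * ∑ i, ℓ (p i f) + Λ * N f := by
    funext f
    simp [J, p, real_inner_comm]
  exact hJ ▸ ⟨_, (hloss.mono hconst).add (hN.const_mul hΛ)⟩

theorem succ_pow_le_factorial_mul_exp (k : ℕ) : ((k : ℝ) + 1) ^ k ≤ k ! * exp k := by
  induction k with
  | zero => simp
  | succ k ih =>
    calc ((k + 1 : ℕ) + 1 : ℝ) ^ (k + 1)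
        = (((k : ℝ) + 1) * (1 + ((k + 1 : ℕ) : ℝ)⁻¹)) ^ (k + 1) := by
          congr 1; push_cast; field_simp
      _ = ((k : ℝ) + 1) * ((k : ℝ) + 1) ^ k * (1 + ((k + 1 : ℕ) : ℝ)⁻¹) ^ (k + 1) := by
          rw [mul_pow, pow_succ']
      _ ≤ ((k : ℝ) + 1) * (k ! * exp k) * exp 1 := by
          gcongr
          exact one_add_inv_pow_le_exp
      _ = (k + 1)! * exp (k + 1 : ℕ) := by
          push_cast [Nat.factorial_succ, exp_add]; ring

theorem pow_le_factorial_mul_exp {x : ℝ} (hx : 0 ≤ x) (k : ℕ) :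
    x ^ k ≤ k ! * exp (k * x / (k + 1)) := by
  have hk : (0 : ℝ) < k + 1 := by positivity
  have hu : x / (k + 1) ≤ exp (x / (k + 1) - 1) := by
    linarith [add_one_le_exp (x / (k + 1) - 1)]
  calc x ^ k = ((k : ℝ) + 1) ^ k * (x / (k + 1)) ^ k := by
        rw [← mul_pow, mul_div_cancel₀ _ hk.ne']
    _ ≤ (k ! * exp k) * exp (x / (k + 1) - 1) ^ k := by
        gcongr
        exact succ_pow_le_factorial_mul_exp k
    _ = k ! * exp (k * x / (k + 1)) := by
        rw [← exp_nat_mul, mul_assoc, ← exp_add]; congr 2; field_simp; ring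

/-- `P(Poisson(x) ≤ m)`, which is also `P(Gamma(m + 1, 1) > x)`. -/
def poissonCDF (m : ℕ) (x : ℝ) : ℝ :=
  exp (-x) * ∑ k ∈ Finset.range (m + 1), x ^ k / k !

theorem poissonCDF_zero_right (m : ℕ) : poissonCDF m 0 = 1 := by
  simp [poissonCDF, Finset.sum_range_succ']

theorem hasDerivAt_poissonCDF (m : ℕ) (x : ℝ) :
    HasDerivAt (poissonCDF m) (-(exp (-x) * x ^ m / m !)) x := by
  induction m with
  | zero =>
    have : poissonCDF 0 = fun x => exp (-x) := by funext x; simp [poissonCDF]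
    simpa [this] using (hasDerivAt_neg x).exp
  | succ m ih =>
    have hterm : HasDerivAt (fun x => exp (-x) * (x ^ (m + 1) / (m + 1)!))
        (-(exp (-x) * x ^ (m + 1) / (m + 1)!) + exp (-x) * x ^ m / m !) x := by
      refine ((hasDerivAt_neg x).exp.mul
        ((hasDerivAt_pow (m + 1) x).div_const ((m + 1)! : ℝ))).congr_deriv ?_
      rw [Nat.add_sub_cancel, Nat.factorial_succ]
      push_cast
      field_simp
    have hsplit : poissonCDF (m + 1) =
        fun x => poissonCDF m x + exp (-x) * (x ^ (m + 1) / (m + 1)!) := by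
      funext x
      rw [poissonCDF, Finset.sum_range_succ _ (m + 1), poissonCDF]
      ring
    rw [hsplit]
    exact (ih.add hterm).congr_deriv (by ring)

theorem tendsto_poissonCDF_atTop (m : ℕ) : Tendsto (poissonCDF m) atTop (𝓝 0) := by
  have : Tendsto (fun x => ∑ k ∈ Finset.range (m + 1), x ^ k * exp (-x) / k !) atTop (𝓝 0) := by
    simpa using tendsto_finsetSum _ fun k _ =>
      (tendsto_pow_mul_exp_neg_atTop_nhds_zero k).div_const (k ! : ℝ)
  refine this.congr fun x => ?_
  rw [poissonCDF, Finset.mul_sum]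
  congr 1 with k
  ring

theorem poissonCDF_le {x : ℝ} (hx : 0 ≤ x) (m : ℕ) :
    poissonCDF m x ≤ (m + 1) * exp (-x / (m + 1)) := by
  have hterm : ∀ k ∈ Finset.range (m + 1), x ^ k / k ! ≤ exp (m * x / (m + 1)) := by
    intro k hk
    have hkm : (k : ℝ) ≤ m := by exact_mod_cast Finset.mem_range_succ_iff.1 hk
    rw [div_le_iff₀ (by positivity), mul_comm]
    refine (pow_le_factorial_mul_exp hx k).trans
      (mul_le_mul_of_nonneg_left (exp_le_exp.2 ?_) (by positivity))
    rw [div_le_div_iff₀ (by positivity) (by positivity)]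
    nlinarith
  calc poissonCDF m x ≤ exp (-x) * ((m + 1) * exp (m * x / (m + 1))) := by
        rw [poissonCDF]
        gcongr
        simpa using Finset.sum_le_sum hterm
    _ = (m + 1) * exp (-x / (m + 1)) := by
        rw [mul_left_comm, ← exp_add]; congr 2; field_simp; ring

section Noise

variable {β : ℝ}

theorem hasDerivAt_poissonCDF_mul (hβ : 0 < β) (m : ℕ) (r : ℝ) :
    HasDerivAt (fun r => -(m ! / β ^ (m + 1)) * poissonCDF m (β * r))
      (r ^ m * exp (-β * r)) r := by
  refine (((hasDerivAt_poissonCDF m (β * r)).comp r ((hasDerivAt_id r).const_mul β)).const_mul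
    (-(m ! / β ^ (m + 1) : ℝ))).congr_deriv ?_
  field_simp
  ring_nf

theorem tendsto_poissonCDF_mul (hβ : 0 < β) (m : ℕ) :
    Tendsto (fun r => -(m ! / β ^ (m + 1)) * poissonCDF m (β * r)) atTop (𝓝 0) := by
  simpa using ((tendsto_poissonCDF_atTop m).comp (tendsto_id.const_mul_atTop hβ)).const_mul
    (-(m ! / β ^ (m + 1) : ℝ))

theorem integral_Ioi_pow_mul_exp_neg_mul (hβ : 0 < β) (m : ℕ) {T : ℝ} (hT : 0 ≤ T) :
    ∫ r in Ioi T, r ^ m * exp (-β * r) = m ! / β ^ (m + 1) * poissonCDF m (β * T) := by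
  rw [integral_Ioi_of_hasDerivAt_of_nonneg' (fun r _ => hasDerivAt_poissonCDF_mul hβ m r)
    (fun r hr => by have : 0 ≤ r := hT.trans hr.le; positivity) (tendsto_poissonCDF_mul hβ m)]
  ring

theorem integrableOn_Ioi_pow_mul_exp_neg_mul (hβ : 0 < β) (m : ℕ) :
    IntegrableOn (fun r => r ^ m * exp (-β * r)) (Ioi 0) :=
  integrableOn_Ioi_deriv_of_nonneg' (fun r _ => hasDerivAt_poissonCDF_mul hβ m r)
    (fun r hr => by have : 0 ≤ r := hr.out.le; positivity) (tendsto_poissonCDF_mul hβ m)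

theorem integrable_exp_neg_mul_norm {E : Type*} [NormedAddCommGroup E] [NormedSpace ℝ E]
    [FiniteDimensional ℝ E] [MeasurableSpace E] [BorelSpace E] (μ : Measure E)
    [μ.IsAddHaarMeasure] (hβ : 0 < β) : Integrable (fun x => exp (-β * ‖x‖)) μ := by
  rcases subsingleton_or_nontrivial E with hE | hE
  · exact (integrable_const 1).mono' (by fun_prop)
      (.of_forall fun x => by simp [Subsingleton.elim x 0])
  · rw [integrable_fun_norm_addHaar μ (f := fun r => exp (-β * r))]
    exact integrableOn_Ioi_pow_mul_exp_neg_mul hβ _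

theorem laplaceLike_preimage_norm (m : ℕ) (hβ : 0 < β) {s : Set ℝ} (hs : MeasurableSet s) :
    laplaceLike (m + 1) β ((‖·‖) ⁻¹' s) =
      ENNReal.ofReal ((m + 1) * volume.real (Metric.ball (0 : Vec (m + 1)) 1) *
        ∫ r in Ioi 0 ∩ s, r ^ m * exp (-β * r)) := by
  have hS : MeasurableSet ((‖·‖) ⁻¹' s : Set (Vec (m + 1))) := measurable_norm hs
  rw [laplaceLike, withDensity_apply _ hS, ← ofReal_integral_eq_lintegral_ofReal
    (integrable_exp_neg_mul_norm _ hβ).integrableOn (.of_forall fun _ => (exp_pos _).le),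
    ← integral_indicator hS]
  have hpolar := integral_fun_norm_addHaar (volume : Measure (Vec (m + 1)))
    (s.indicator fun r => exp (-β * r))
  simp only [finrank_euclideanSpace_fin, add_tsub_cancel_right, nsmul_eq_mul, smul_eq_mul,
    ← indicator_mul_right s (fun y => y ^ m), setIntegral_indicator hs] at hpolar
  have hcomp : ∀ x : Vec (m + 1), ((‖·‖) ⁻¹' s).indicator (fun x => exp (-β * ‖x‖)) x =
      s.indicator (fun r => exp (-β * r)) ‖x‖ := fun x =>
    indicator_comp_right (g := fun r => exp (-β * r)) (‖·‖)
  simp only [hcomp, hpolar, Nat.cast_succ]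
  congr 1
  ring

theorem isProbabilityMeasure_noiseP (d : ℕ) (hβ : 0 < β) :
    IsProbabilityMeasure (noiseP d β) := by
  have hfin : laplaceLike d β univ ≠ ⊤ := by
    rw [laplaceLike, withDensity_apply _ MeasurableSet.univ, Measure.restrict_univ]
    exact (integrable_exp_neg_mul_norm volume hβ).lintegral_lt_top.ne
  have hpos : laplaceLike d β univ ≠ 0 := by
    rw [laplaceLike, Ne, withDensity_apply_eq_zero' (by fun_prop)]
    simp [exp_pos, NeZero.ne]
  constructor
  simp [noiseP, ENNReal.inv_mul_cancel hpos hfin]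

theorem noiseP_setOf_lt_norm (m : ℕ) (hβ : 0 < β) {t : ℝ} (ht : 0 ≤ t) :
    noiseP (m + 1) β {b | t < ‖b‖} = ENNReal.ofReal (poissonCDF m (β * t)) := by
  set C := ((m : ℝ) + 1) * volume.real (Metric.ball (0 : Vec (m + 1)) 1) * (m ! / β ^ (m + 1))
  have hC : 0 < C := by
    have : 0 < volume.real (Metric.ball (0 : Vec (m + 1)) 1) :=
      ENNReal.toReal_pos (Metric.measure_ball_pos _ _ one_pos).ne' measure_ball_lt_top.ne
    positivity
  have huniv : laplaceLike (m + 1) β univ = ENNReal.ofReal C := by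
    rw [← preimage_univ, laplaceLike_preimage_norm m hβ MeasurableSet.univ, inter_univ,
      integral_Ioi_pow_mul_exp_neg_mul hβ m le_rfl, mul_zero, poissonCDF_zero_right, mul_one]
  have htail : laplaceLike (m + 1) β {b | t < ‖b‖} =
      ENNReal.ofReal C * ENNReal.ofReal (poissonCDF m (β * t)) := by
    rw [← ENNReal.ofReal_mul hC.le, show {b : Vec (m + 1) | t < ‖b‖} = (‖·‖) ⁻¹' Ioi t from rfl,
      laplaceLike_preimage_norm m hβ measurableSet_Ioi, Ioi_inter_Ioi, sup_of_le_right ht,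
      integral_Ioi_pow_mul_exp_neg_mul hβ m ht]
    congr 1
    ring
  rw [noiseP, Measure.smul_apply, smul_eq_mul, huniv, htail, ← mul_assoc,
    ENNReal.inv_mul_cancel (ENNReal.ofReal_pos.2 hC).ne' ENNReal.ofReal_ne_top, one_mul]

theorem one_sub_le_noiseP_setOf_norm_le (d : ℕ) (hβ : 0 < β) {δ : ℝ} (hδ : δ ∈ Ioo (0 : ℝ) 1) :
    ENNReal.ofReal (1 - δ) ≤ noiseP d β {b | ‖b‖ ≤ d * log (d / δ) / β} := by
  have := isProbabilityMeasure_noiseP d hβ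
  rcases d with _ | m
  · have : {b : Vec 0 | ‖b‖ ≤ (0 : ℕ) * log ((0 : ℕ) / δ) / β} = univ :=
      eq_univ_of_forall fun b => by simp [Subsingleton.elim b 0]
    rw [this, measure_univ]
    exact ENNReal.ofReal_le_one.2 (by linarith [hδ.1])
  · set t := ((m + 1 : ℕ) : ℝ) * log ((m + 1 : ℕ) / δ) / β
    have hL : 0 < log ((m + 1 : ℕ) / δ) :=
      log_pos ((one_lt_div hδ.1).2 (by push_cast; linarith [hδ.2, m.cast_nonneg (α := ℝ)]))
    have ht : 0 ≤ t := by positivity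
    have htail : poissonCDF m (β * t) ≤ δ := calc
      poissonCDF m (β * t) ≤ (m + 1) * exp (-(β * t) / (m + 1)) :=
        poissonCDF_le (by positivity) m
      _ = δ := by
        have : -(β * t) / (m + 1) = -log ((m + 1 : ℕ) / δ) := by
          simp only [t]; push_cast; field_simp
        rw [this, exp_neg, exp_log (by have := hδ.1; positivity)]
        push_cast
        field_simp
    have hcompl : {b : Vec (m + 1) | ‖b‖ ≤ t} = {b | t < ‖b‖}ᶜ := by ext; simp
    rw [hcompl, prob_compl_eq_one_sub (measurableSet_lt measurable_const measurable_norm),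
      noiseP_setOf_lt_norm m hβ ht, ENNReal.ofReal_sub _ hδ.1.le, ENNReal.ofReal_one]
    gcongr

end Noise

theorem output_perturbation_training_error_general
    (d n : ℕ) (hn : 0 < n) (Λ εp η c δ : ℝ)
    (hΛ : 0 < Λ) (hεp : 0 < εp) (hη : 0 ≤ η) (hc : 0 ≤ c) (hδ : δ ∈ Set.Ioo (0:ℝ) 1)
    (ℓ : ℝ → ℝ) (N : Vec d → ℝ)
    (hNdiff : Differentiable ℝ N) (hNdiff2 : Differentiable ℝ (fderiv ℝ N))
    (hHess : ∀ f : Vec d, ‖fderiv ℝ (fderiv ℝ N) f‖ ≤ η)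
    (hℓdiff : Differentiable ℝ ℓ)
    (hℓLip : ∀ z₁ z₂ : ℝ, |deriv ℓ z₁ - deriv ℓ z₂| ≤ c * |z₁ - z₂|)
    (D : Dataset d n) (hD : ValidDataset D)
    (fstar : Vec d) (hfstar : ∀ g : Vec d, J ℓ N Λ D fstar ≤ J ℓ N Λ D g) :
    ENNReal.ofReal (1 - δ) ≤
      noiseP d ((n : ℝ) * Λ * εp / 2)
        {b : Vec d | J ℓ N Λ D (fstar + b) ≤ J ℓ N Λ D fstar +
          2 * (d : ℝ) ^ 2 * (c + Λ * η) * Real.log ((d : ℝ) / δ) ^ 2 /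
            (Λ ^ 2 * (n : ℝ) ^ 2 * εp ^ 2)} := by
  have hβ : 0 < (n : ℝ) * Λ * εp / 2 := by
    have : (0 : ℝ) < n := by exact_mod_cast hn
    positivity
  obtain ⟨J', hJ⟩ := hasLipschitzFDeriv_J hD hΛ.le hc hℓdiff hℓLip
    (hasLipschitzFDeriv_of_norm_fderiv_fderiv_le hNdiff hNdiff2 hHess)
  refine (one_sub_le_noiseP_setOf_norm_le d hβ hδ).trans
    (measure_mono fun b (hb : ‖b‖ ≤ _) => ?_)
  refine (hJ.apply_add_le_of_forall_le hfstar b).trans (add_le_add_right ?_ _)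
  calc (c + Λ * η) / 2 * ‖b‖ ^ 2
      ≤ (c + Λ * η) / 2 * (d * log (d / δ) / ((n : ℝ) * Λ * εp / 2)) ^ 2 := by gcongr
    _ = _ := by field_simp

/-- Lemma 16: if N is twice differentiable with Hessian operator norm
at most η and ℓ is differentiable with continuous c-Lipschitz derivative, then with
probability ≥ 1 − δ over the noise b (density ∝ e^{-(nΛε_p/2)‖b‖}), the output
f_priv = f* + b of Algorithm 1 satisfies
J(f_priv, D) ≤ J(f*, D) + 2d²(c + Λη)log²(d/δ)/(Λ²n²ε_p²). -/
theorem output_perturbation_training_error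
    (d n : ℕ) (hn : 0 < n) (Λ εp η c δ : ℝ)
    (hΛ : 0 < Λ) (hεp : 0 < εp) (hη : 0 ≤ η) (hc : 0 ≤ c) (hδ : δ ∈ Set.Ioo (0:ℝ) 1)
    (ℓ : ℝ → ℝ) (N : Vec d → ℝ)
    (hNdiff : Differentiable ℝ N) (hNdiff2 : Differentiable ℝ (fderiv ℝ N))
    (hHess : ∀ f : Vec d, ‖fderiv ℝ (fderiv ℝ N) f‖ ≤ η)
    (hℓdiff : Differentiable ℝ ℓ) (hℓcont : Continuous (deriv ℓ))
    (hℓLip : ∀ z₁ z₂ : ℝ, |deriv ℓ z₁ - deriv ℓ z₂| ≤ c * |z₁ - z₂|)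
    (D : Dataset d n) (hD : ValidDataset D)
    (fstar : Vec d) (hfstar : ∀ g : Vec d, J ℓ N Λ D fstar ≤ J ℓ N Λ D g) :
    ENNReal.ofReal (1 - δ) ≤
      noiseP d ((n : ℝ) * Λ * εp / 2)
        {b : Vec d | J ℓ N Λ D (fstar + b) ≤ J ℓ N Λ D fstar +
          2 * (d : ℝ) ^ 2 * (c + Λ * η) * Real.log ((d : ℝ) / δ) ^ 2 /
            (Λ ^ 2 * (n : ℝ) ^ 2 * εp ^ 2)} :=
  output_perturbation_training_error_general d n hn Λ εp η c δ hΛ hεp hη hc hδ ℓ N hNdiff hNdiff2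
    hHess hℓdiff hℓLip D hD fstar hfstar
end
end

section
/- Let k be a positive integer, θ > 0, and let X be a random variable with the Gamma(k, θ) distribution (shape k, scale θ). Then for any δ ∈ (0,1), ℙ(X < kθ log(k/δ)) ≥ 1 − δ. -/
open MeasureTheory ProbabilityTheory Real

noncomputable section

open Set Nat
open scoped ENNReal

/-!
For integer shape `k = m + 1` and rate `r`, the Gamma density is at most `k` times the density of
the exponential law with rate `r / k`. With `y = r x / k` this reduces to
`y ^ m * exp (-(m + 1) y) ≤ exp (-m) * exp (-y)` (the maximum of `y e^{-y}` is `e^{-1}`) and to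
`k ^ m ≤ e ^ m * m!`. Hence `ℙ(X ≥ t) ≤ k exp (-r t / k)`, which equals `δ` at
`t = k θ log (k / δ)` when `r = 1 / θ`.
-/

lemma add_one_pow_le_exp_one_pow_mul_factorial (n : ℕ) :
    ((n : ℝ) + 1) ^ n ≤ exp 1 ^ n * n ! := by
  induction n with
  | zero => simp
  | succ n ih =>
    have hsplit : ((n : ℝ) + 1 + 1) ^ (n + 1) =
        (n + 1) * (n + 1) ^ n * (1 + (n + 1 : ℝ)⁻¹) ^ (n + 1) := by
      have : (n : ℝ) + 1 + 1 = (n + 1) * (1 + (n + 1 : ℝ)⁻¹) := by field_simp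
      rw [this, mul_pow, pow_succ]; ring
    have he : (1 + ((n + 1 : ℕ) : ℝ)⁻¹) ^ (n + 1) ≤ exp 1 := one_add_inv_pow_le_exp
    push_cast at he ⊢
    rw [hsplit, factorial_succ]; push_cast
    calc (n + 1) * (n + 1) ^ n * (1 + (n + 1 : ℝ)⁻¹) ^ (n + 1)
        ≤ (n + 1) * (exp 1 ^ n * n !) * exp 1 := by gcongr
      _ = exp 1 ^ (n + 1) * ((n + 1) * n !) := by ring

lemma pow_mul_exp_neg_le {y : ℝ} (hy : 0 ≤ y) (n : ℕ) :
    y ^ n * exp (-((n + 1) * y)) ≤ exp (-n) * exp (-y) := by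
  calc y ^ n * exp (-((n + 1) * y)) = (y * exp (-y)) ^ n * exp (-y) := by
        rw [mul_pow, ← exp_nat_mul, mul_assoc, ← exp_add]; congr 2; ring
    _ ≤ exp (-1) ^ n * exp (-y) := by
        gcongr; exact mul_exp_neg_le_exp_neg_one y
    _ = exp (-n) * exp (-y) := by rw [← exp_nat_mul]; ring_nf

lemma gammaPDF_le_mul_exponentialPDF (m : ℕ) {r : ℝ} (hr : 0 < r) (x : ℝ) :
    gammaPDF (m + 1) r x ≤ (m + 1) * exponentialPDF (r / (m + 1)) x := by
  rcases lt_or_ge x 0 with hx | hx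
  · simp [gammaPDF_of_neg hx]
  rw [gammaPDF_of_nonneg hx, exponentialPDF_of_nonneg hx,
    show ((m : ℝ≥0∞) + 1) = ENNReal.ofReal (m + 1) by norm_cast,
    ← ENNReal.ofReal_mul (by positivity)]
  apply ENNReal.ofReal_le_ofReal
  set y := r / (m + 1) * x with hy
  have hx_eq : x = (m + 1) / r * y := by rw [hy]; field_simp
  have hfact : ((m : ℝ) + 1) ^ m / (exp 1 ^ m * m !) ≤ 1 :=
    div_le_one_of_le₀ (add_one_pow_le_exp_one_pow_mul_factorial m) (by positivity)
  rw [show r ^ ((m : ℝ) + 1) = r ^ (m + 1) by exact_mod_cast rpow_natCast r (m + 1),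
    add_sub_cancel_right, rpow_natCast, Gamma_nat_eq_factorial]
  calc r ^ (m + 1) / m ! * x ^ m * exp (-(r * x))
      = r * ((m + 1) ^ m / m !) * (y ^ m * exp (-((m + 1) * y))) := by
        rw [hx_eq, mul_pow, div_pow, pow_succ]; field_simp
    _ ≤ r * ((m + 1) ^ m / m !) * (exp (-m) * exp (-y)) := by
        have hy0 : 0 ≤ y := by positivity
        exact mul_le_mul_of_nonneg_left (pow_mul_exp_neg_le hy0 m) (by positivity)
    _ = r * ((m + 1) ^ m / (exp 1 ^ m * m !)) * exp (-y) := by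
        rw [exp_neg, exp_one_pow]; field_simp
    _ ≤ r * 1 * exp (-y) := by gcongr
    _ = (m + 1) * (r / (m + 1) * exp (-y)) := by field_simp

lemma gammaMeasure_le_smul_expMeasure (m : ℕ) {r : ℝ} (hr : 0 < r) :
    gammaMeasure (m + 1) r ≤ ((m : ℝ≥0∞) + 1) • expMeasure (r / (m + 1)) := by
  rw [expMeasure, gammaMeasure, gammaMeasure,
    ← withDensity_smul _ (f := gammaPDF 1 (r / (m + 1)))
      (measurable_gammaPDFReal _ _).ennreal_ofReal]
  exact withDensity_mono (ae_of_all _ (gammaPDF_le_mul_exponentialPDF m hr))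

lemma expMeasure_Ici {r t : ℝ} (hr : 0 < r) (ht : 0 ≤ t) :
    expMeasure r (Ici t) = ENNReal.ofReal (exp (-(r * t))) := by
  have := isProbabilityMeasure_expMeasure hr
  have hexp : exp (-(r * t)) ≤ 1 := exp_le_one_iff.2 (by nlinarith)
  calc expMeasure r (Ici t) = expMeasure r (Ioi t) :=
        measure_congr ((withDensity_absolutelyContinuous _ _).ae_eq Ioi_ae_eq_Ici).symm
    _ = 1 - expMeasure r (Iic t) := by
        rw [← compl_Iic, prob_compl_eq_one_sub measurableSet_Iic]
    _ = ENNReal.ofReal (exp (-(r * t))) := by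
        rw [← ofReal_cdf, cdf_expMeasure_eq hr, if_pos ht, ENNReal.ofReal_sub _ (exp_pos _).le,
          ENNReal.ofReal_one,
          ENNReal.sub_sub_cancel ENNReal.one_ne_top (ENNReal.ofReal_le_one.2 hexp)]

lemma gammaMeasure_Ici_le (m : ℕ) {r t : ℝ} (hr : 0 < r) (ht : 0 ≤ t) :
    gammaMeasure (m + 1) r (Ici t) ≤ ENNReal.ofReal ((m + 1) * exp (-(r / (m + 1) * t))) := by
  calc gammaMeasure (m + 1) r (Ici t) ≤ (((m : ℝ≥0∞) + 1) • expMeasure (r / (m + 1))) (Ici t) :=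
        gammaMeasure_le_smul_expMeasure m hr _
    _ = _ := by
        rw [Measure.smul_apply, expMeasure_Ici (by positivity) ht, smul_eq_mul,
          ENNReal.ofReal_mul (by positivity)]
        norm_cast

/-- Lemma 17: if X ~ Gamma(k, θ) with integer shape k and scale θ
(i.e. rate 1/θ), then ℙ(X < kθ log(k/δ)) ≥ 1 − δ for any δ ∈ (0,1). -/
theorem gamma_tail_bound
    (k : ℕ) (hk : 0 < k) (θ δ : ℝ) (hθ : 0 < θ) (hδ : δ ∈ Set.Ioo (0:ℝ) 1) :
    ENNReal.ofReal (1 - δ) ≤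
      gammaMeasure (k : ℝ) (1 / θ) {x : ℝ | x < (k : ℝ) * θ * Real.log ((k : ℝ) / δ)} := by
  obtain ⟨hδ0, hδ1⟩ := hδ
  obtain ⟨m, rfl⟩ := Nat.exists_eq_add_one_of_ne_zero hk.ne'
  push_cast
  have := isProbabilityMeasure_gammaMeasure (a := (m : ℝ) + 1) (by positivity)
    (by positivity : 0 < 1 / θ)
  set t := ((m : ℝ) + 1) * θ * log ((m + 1) / δ)
  have hlog : 0 < log ((m + 1) / δ) :=
    log_pos ((one_lt_div hδ0).2 (by linarith [m.cast_nonneg (α := ℝ)]))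
  have htail : gammaMeasure ((m : ℝ) + 1) (1 / θ) (Ici t) ≤ ENNReal.ofReal δ := by
    refine (gammaMeasure_Ici_le m (by positivity) (by positivity)).trans_eq ?_
    rw [show 1 / θ / (m + 1) * t = log ((m + 1) / δ) by simp only [t]; field_simp,
      exp_neg, exp_log (by positivity)]
    field_simp
  rw [show {x : ℝ | x < t} = (Ici t)ᶜ from compl_Ici.symm,
    prob_compl_eq_one_sub measurableSet_Ici, ENNReal.ofReal_sub _ hδ0.le, ENNReal.ofReal_one]
  exact tsub_le_tsub_left htail 1
end
end

section
/- Suppose each of the m base learning algorithms used in step 2 of the tuning procedure (Algorithm 4) provides ε_p-differential privacy. Then the output of the tuning procedure is ε_p-differentially private: for every measurable set S of classifiers and every pair of datasets D, D' differing in the private value of one individual, ℙ(f_priv ∈ S | D) ≤ e^{ε_p} ℙ(f_priv ∈ S | D'). -/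
open MeasureTheory Real Set
open scoped ENNReal

noncomputable section

/-- Number of mistakes of the linear classifier f on a validation set V. -/
def mistakes {d k : ℕ} (f : Vec d) (V : Dataset d k) : ℕ :=
  (Finset.univ.filter fun i => (V i).2 * (inner ℝ f (V i).1 : ℝ) ≤ 0).card

/-- The exponential-mechanism selection weight q_i = e^{-ε_p z_i/2}/Σ_j e^{-ε_p z_j/2}
for the i-th candidate classifier, given the tuple of trained classifiers fs and the
validation set V. -/
def selWeight {d k m : ℕ} (εp : ℝ) (fs : Fin m → Vec d) (V : Dataset d k) (i : Fin m) : ℝ :=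
  Real.exp (-εp * (mistakes (fs i) V : ℝ) / 2) /
    ∑ j, Real.exp (-εp * (mistakes (fs j) V : ℝ) / 2)

/-- The output distribution of the tuning procedure (Algorithm 4): the database is split
into m+1 portions, the i-th base algorithm is run on portion i, and the i-th trained
classifier is released with probability q_i. -/
def tuningOutput {d k m : ℕ} (εp : ℝ) (A : Fin m → Dataset d k → Measure (Vec d))
    (D : Fin (m + 1) → Dataset d k) (S : Set (Vec d)) : ℝ≥0∞ :=
  ∫⁻ fs : Fin m → Vec d,
      ∑ i, ENNReal.ofReal (selWeight εp fs (D (Fin.last m)) i) *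
        S.indicator (fun _ => (1 : ℝ≥0∞)) (fs i)
    ∂(Measure.pi fun i => A i (D i.castSucc))

/-!
The individual who differs lies in exactly one of the m + 1 portions. If it is the validation
portion, the trained classifiers have the same joint law under D and D', and every mistake count
moves by at most one, so each exponential-mechanism weight `q_i` grows by a factor of at most
`e^{ε_p}`. If it is a training portion, the selection rule is the same function of the classifiers
under D and D', and the joint law of the independent classifiers (a product measure) grows by a
factor of at most `e^{ε_p}`, since only one factor changes and that one is `ε_p`-private.
-/

open scoped NNReal

namespace MeasureTheory.Measure

variable {ι : Type*} [Fintype ι] {α : ι → Type*} [∀ i, MeasurableSpace (α i)]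

/-- Needs no σ-finiteness: `Measure.pi` is built from an outer measure bounded by products of
the factors' measures of boxes, and that is monotone in the factors. -/
theorem pi_mono {μ ν : ∀ i, Measure (α i)} (h : ∀ i, μ i ≤ ν i) :
    Measure.pi μ ≤ Measure.pi ν := by
  rw [Measure.le_iff]
  intro s hs
  rw [Measure.pi, Measure.pi, toMeasure_apply _ _ hs, toMeasure_apply _ _ hs,
    OuterMeasure.pi, OuterMeasure.pi, OuterMeasure.boundedBy_apply,
    OuterMeasure.boundedBy_apply]
  exact iInf_mono fun t => iInf_mono fun _ => ENNReal.tsum_le_tsum fun n =>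
    iSup_mono fun _ => Finset.prod_le_prod' fun i _ => Measure.le_iff'.mp (h i) _

theorem pi_update_smul [DecidableEq ι] (μ : ∀ i, Measure (α i)) [∀ i, SigmaFinite (μ i)]
    (i₀ : ι) (c : ℝ≥0) :
    Measure.pi (Function.update μ i₀ (c • μ i₀)) = c • Measure.pi μ := by
  have : ∀ i, SigmaFinite (Function.update μ i₀ (c • μ i₀) i) := fun i => by
    rcases eq_or_ne i i₀ with rfl | hi
    · rw [Function.update_self]; infer_instance
    · rw [Function.update_of_ne hi]; infer_instance
  refine Measure.pi_eq fun s _ => ?_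
  have hrest : ∏ j ∈ Finset.univ.erase i₀, Function.update μ i₀ (c • μ i₀) j (s j) =
      ∏ j ∈ Finset.univ.erase i₀, μ j (s j) :=
    Finset.prod_congr rfl fun j hj => by rw [Function.update_of_ne (Finset.ne_of_mem_erase hj)]
  rw [Measure.smul_apply, Measure.pi_pi,
    ← Finset.mul_prod_erase _ (fun i => Function.update μ i₀ (c • μ i₀) i (s i))
      (Finset.mem_univ i₀),
    ← Finset.mul_prod_erase _ (fun i => μ i (s i)) (Finset.mem_univ i₀), hrest,
    Function.update_self, Measure.smul_apply, smul_mul_assoc]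

theorem pi_le_smul_pi {μ ν : ∀ i, Measure (α i)} [∀ i, SigmaFinite (ν i)] {i₀ : ι} {c : ℝ≥0}
    (h₀ : μ i₀ ≤ c • ν i₀) (h : ∀ i, i ≠ i₀ → μ i ≤ ν i) :
    Measure.pi μ ≤ c • Measure.pi ν := by
  classical
  rw [← pi_update_smul]
  refine pi_mono fun i => ?_
  rcases eq_or_ne i i₀ with rfl | hi
  · rwa [Function.update_self]
  · rw [Function.update_of_ne hi]; exact h i hi

end MeasureTheory.Measure

theorem Neighbor.symm {d n : ℕ} {D D' : Dataset d n} (h : Neighbor D D') : Neighbor D' D :=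
  let ⟨j, hj⟩ := h
  ⟨j, fun i hi => (hj i hi).symm⟩

theorem mistakes_le_add_one_of_neighbor {d k : ℕ} {V V' : Dataset d k} (h : Neighbor V V')
    (f : Vec d) : mistakes f V ≤ mistakes f V' + 1 := by
  obtain ⟨j, hj⟩ := h
  refine (Finset.card_le_card fun i hi => ?_).trans (Finset.card_insert_le j _)
  rcases eq_or_ne i j with rfl | hij
  · exact Finset.mem_insert_self _ _
  · simpa only [Finset.mem_insert, Finset.mem_filter, Finset.mem_univ, true_and, hj i hij,
      hij, false_or] using hi

theorem abs_mistakes_sub_le_one_of_neighbor {d k : ℕ} {V V' : Dataset d k}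
    (h : Neighbor V V') (f : Vec d) : |(mistakes f V : ℝ) - mistakes f V'| ≤ 1 := by
  have h₁ := mistakes_le_add_one_of_neighbor h f
  have h₂ := mistakes_le_add_one_of_neighbor h.symm f
  rw [abs_sub_le_iff, sub_le_iff_le_add', sub_le_iff_le_add']
  exact ⟨by exact_mod_cast h₁, by exact_mod_cast h₂⟩

theorem exp_neg_mul_half_le {ε Δ a b : ℝ} (hε : 0 ≤ ε) (hab : |a - b| ≤ Δ) :
    exp (-ε * a / 2) ≤ exp (ε * Δ / 2) * exp (-ε * b / 2) := by
  rw [← exp_add, exp_le_exp]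
  nlinarith [neg_abs_le (a - b)]

/-- Privacy of the exponential mechanism for scores of sensitivity `Δ`. -/
theorem exp_div_sum_exp_le {ι : Type*} [Fintype ι] {ε Δ : ℝ} (hε : 0 ≤ ε) {u v : ι → ℝ}
    (huv : ∀ j, |u j - v j| ≤ Δ) (i : ι) :
    exp (-ε * u i / 2) / ∑ j, exp (-ε * u j / 2) ≤
      exp (ε * Δ) * (exp (-ε * v i / 2) / ∑ j, exp (-ε * v j / 2)) := by
  have hsum_pos : ∀ w : ι → ℝ, 0 < ∑ j, exp (-ε * w j / 2) := fun w =>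
    Finset.sum_pos (fun j _ => exp_pos _) ⟨i, Finset.mem_univ i⟩
  have hnum := exp_neg_mul_half_le hε (huv i)
  have hden : ∑ j, exp (-ε * v j / 2) ≤ exp (ε * Δ / 2) * ∑ j, exp (-ε * u j / 2) := by
    rw [Finset.mul_sum]
    exact Finset.sum_le_sum fun j _ => exp_neg_mul_half_le hε (abs_sub_comm (u j) (v j) ▸ huv j)
  rw [← mul_div_assoc, div_le_div_iff₀ (hsum_pos u) (hsum_pos v)]
  calc exp (-ε * u i / 2) * ∑ j, exp (-ε * v j / 2)
      ≤ (exp (ε * Δ / 2) * exp (-ε * v i / 2)) * (exp (ε * Δ / 2) * ∑ j, exp (-ε * u j / 2)) :=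
        mul_le_mul hnum hden (hsum_pos v).le (by positivity)
    _ = exp (ε * Δ) * exp (-ε * v i / 2) * ∑ j, exp (-ε * u j / 2) := by
        rw [mul_mul_mul_comm, ← exp_add, add_halves, mul_assoc]

theorem selWeight_le_of_neighbor {d k m : ℕ} {εp : ℝ} (hεp : 0 ≤ εp) (fs : Fin m → Vec d)
    {V V' : Dataset d k} (h : Neighbor V V') (i : Fin m) :
    selWeight εp fs V i ≤ exp εp * selWeight εp fs V' i := by
  simpa only [selWeight, mul_one] using
    exp_div_sum_exp_le hεp (fun j => abs_mistakes_sub_le_one_of_neighbor h (fs j)) i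

theorem tuningOutput_le_of_neighbor_validation {d k m : ℕ} {εp : ℝ} (hεp : 0 ≤ εp)
    (A : Fin m → Dataset d k → Measure (Vec d)) {D D' : Fin (m + 1) → Dataset d k}
    (htrain : ∀ i : Fin m, D i.castSucc = D' i.castSucc)
    (hval : Neighbor (D (Fin.last m)) (D' (Fin.last m))) (S : Set (Vec d)) :
    tuningOutput εp A D S ≤ ENNReal.ofReal (exp εp) * tuningOutput εp A D' S := by
  unfold tuningOutput
  simp only [htrain]
  rw [← lintegral_const_mul' _ _ ENNReal.ofReal_ne_top]
  refine lintegral_mono fun fs => ?_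
  rw [Finset.mul_sum]
  refine Finset.sum_le_sum fun i _ => ?_
  rw [← mul_assoc, ← ENNReal.ofReal_mul (exp_pos εp).le]
  gcongr
  exact selWeight_le_of_neighbor hεp fs hval i

theorem tuningOutput_le_of_le_training {d k m : ℕ} (εp : ℝ)
    (A : Fin m → Dataset d k → Measure (Vec d)) {D D' : Fin (m + 1) → Dataset d k}
    [∀ i, SigmaFinite (A i (D' i.castSucc))] {i₀ : Fin m} {c : ℝ≥0}
    (h₀ : A i₀ (D i₀.castSucc) ≤ c • A i₀ (D' i₀.castSucc))
    (htrain : ∀ i, i ≠ i₀ → D i.castSucc = D' i.castSucc)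
    (hval : D (Fin.last m) = D' (Fin.last m)) (S : Set (Vec d)) :
    tuningOutput εp A D S ≤ c * tuningOutput εp A D' S := by
  unfold tuningOutput
  rw [hval, ← smul_eq_mul, ← lintegral_smul_measure]
  refine lintegral_mono' (Measure.pi_le_smul_pi h₀ fun i hi => ?_) le_rfl
  rw [htrain i hi]

theorem tuning_procedure_private_general
    (d k m : ℕ) (εp : ℝ) (hεp : 0 < εp)
    (A : Fin m → Dataset d k → Measure (Vec d))
    (hAprob : ∀ (i : Fin m) (Di : Dataset d k), IsProbabilityMeasure (A i Di))
    (hADP : ∀ i : Fin m, DiffPrivate εp (A i))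
    (D D' : Fin (m + 1) → Dataset d k)
    (hD : ∀ j, ValidDataset (D j)) (hD' : ∀ j, ValidDataset (D' j))
    (hne : ∃ j₀ : Fin (m + 1),
      (∀ j, j ≠ j₀ → D j = D' j) ∧ Neighbor (D j₀) (D' j₀))
    (S : Set (Vec d)) :
    tuningOutput εp A D S ≤
      ENNReal.ofReal (Real.exp εp) * tuningOutput εp A D' S := by
  obtain ⟨j₀, hagree, hnb⟩ := hne
  induction j₀ using Fin.lastCases with
  | last =>
    exact tuningOutput_le_of_neighbor_validation hεp.le A
      (fun i => hagree _ (Fin.castSucc_lt_last i).ne) hnb S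
  | cast i₀ =>
    have := fun i => hAprob i (D' i.castSucc)
    refine tuningOutput_le_of_le_training εp A (Measure.le_iff.2 fun s hs => ?_)
      (fun i hi => hagree _ ((Fin.castSucc_injective m).ne hi))
      (hagree _ (Fin.castSucc_lt_last i₀).ne') S
    exact hADP i₀ _ _ (hD _) (hD' _) hnb s hs

/-- Theorem 24: if each of the m base learning algorithms is
ε_p-differentially private, then the tuning procedure (Algorithm 4) is
ε_p-differentially private: ℙ(f_priv ∈ S | D) ≤ e^{ε_p} ℙ(f_priv ∈ S | D') for every
measurable S and every pair of databases differing in the value of one individual. -/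
theorem tuning_procedure_private
    (d k m : ℕ) (hk : 0 < k) (hm : 0 < m) (εp : ℝ) (hεp : 0 < εp)
    (A : Fin m → Dataset d k → Measure (Vec d))
    (hAprob : ∀ (i : Fin m) (Di : Dataset d k), IsProbabilityMeasure (A i Di))
    (hADP : ∀ i : Fin m, DiffPrivate εp (A i))
    (D D' : Fin (m + 1) → Dataset d k)
    (hD : ∀ j, ValidDataset (D j)) (hD' : ∀ j, ValidDataset (D' j))
    (hne : ∃ j₀ : Fin (m + 1),
      (∀ j, j ≠ j₀ → D j = D' j) ∧ Neighbor (D j₀) (D' j₀))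
    (S : Set (Vec d)) (hS : MeasurableSet S) :
    tuningOutput εp A D S ≤
      ENNReal.ofReal (Real.exp εp) * tuningOutput εp A D' S :=
  tuning_procedure_private_general d k m εp hεp A hAprob hADP D D' hD hD' hne S
end
end
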